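/- Let L be a positive integer and E, k ∈ ℝ. A vector v ∈ ℂ^{ℤ/Lℤ} × ℂ^{ℤ/Lℤ} satisfies ∑_{n=0}^{∞} ‖T₀(E,k)ⁿ v‖² < ∞ if and only if v belongs to the ℂ-linear span of the set of vectors (μ·v_j, v_j), where j ranges over ℤ/Lℤ and μ ranges over the complex numbers with |μ| < 1 and μ² − (E − 2·cos(k + 2πj/L))·μ + 1 = 0, and where v_j ∈ ℂ^{ℤ/Lℤ} is the vector v_j(m) = e^{2πi·j·m/L}. -/

import Mathlib

open scoped BigOperators

noncomputable section

/-- The twisted Laplacian `Δᵏ` on `ℂ^{ℤ/Lℤ}`. -/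
def deltaK (L : ℕ) (k : ℝ) (φ : ZMod L → ℂ) : ZMod L → ℂ :=
  fun j => Complex.exp (Complex.I * k) * φ (j + 1) + Complex.exp (-(Complex.I * k)) * φ (j - 1)

/-- The free transfer matrix `T₀(E,k)` on `ℂ^{ℤ/Lℤ} × ℂ^{ℤ/Lℤ}`. -/
def T0 (L : ℕ) (E k : ℝ) (Ψ : (ZMod L → ℂ) × (ZMod L → ℂ)) : (ZMod L → ℂ) × (ZMod L → ℂ) :=
  (fun j => (E : ℂ) * Ψ.1 j - deltaK L k Ψ.1 j - Ψ.2 j, Ψ.1)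

/-- The squared Euclidean norm on `ℂ^{ℤ/Lℤ} × ℂ^{ℤ/Lℤ}`. -/
def normSq (L : ℕ) [NeZero L] (Ψ : (ZMod L → ℂ) × (ZMod L → ℂ)) : ℝ :=
  ∑ j : ZMod L, ‖Ψ.1 j‖ ^ 2 + ∑ j : ZMod L, ‖Ψ.2 j‖ ^ 2

/-- The vector `v_j(m) = e^{2πi·j·m/L}` in `ℂ^{ℤ/Lℤ}`. -/
def fourierVec (L : ℕ) (j : ZMod L) : ZMod L → ℂ :=
  fun m => Complex.exp (2 * Real.pi * Complex.I * (j.val : ℂ) * (m.val : ℂ) / (L : ℂ))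

/-!
The vectors `v_j` diagonalise `Δᵏ`, with eigenvalue `2 cos θ_j`, `θ_j = k + 2πj/L`. Hence `T₀` maps
the `j`-th Fourier component `(a v_j, b v_j)` to `((λ_j a - b) v_j, a v_j)` with
`λ_j = E - 2 cos θ_j`, and the second Fourier coefficients `p n` along an orbit satisfy
`p (n + 2) = λ_j p (n + 1) - p n`. The roots `μ, ν` of `X² - λ_j X + 1` have `μ ν = 1`; ordering
them so that `‖ν‖ ≥ 1`, we get `p (n + 1) - μ p n = νⁿ (p 1 - μ p 0)`. If the orbit is square
summable then `p n → 0`, which forces `p 1 = μ p 0`, i.e. the component is a multiple of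
`(μ v_j, v_j)`, and `‖μ‖ < 1` unless it vanishes. Conversely `(μ v_j, v_j)` is an eigenvector of
`T₀` with eigenvalue `μ`, and square-summable orbits form a subspace.
-/

open Filter Topology
open ZMod (stdAddChar stdAddChar_apply toCircle_apply toCircle_natCast natCast_zmod_val dft_apply
  invDFT_apply)
open scoped ZMod

section Fourier

variable {L : ℕ} [NeZero L]

lemma fourierVec_apply (j m : ZMod L) : fourierVec L j m = stdAddChar (j * m) := by
  have h := toCircle_natCast (N := L) (j.val * m.val)
  rw [Nat.cast_mul, natCast_zmod_val, natCast_zmod_val] at h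
  rw [stdAddChar_apply, h, fourierVec]
  push_cast
  ring_nf

lemma exp_mul_stdAddChar_add_exp_mul_stdAddChar_neg (k : ℝ) (j : ZMod L) :
    Complex.exp (Complex.I * k) * stdAddChar j + Complex.exp (-(Complex.I * k)) * stdAddChar (-j) =
      ((2 * Real.cos (k + 2 * Real.pi * j.val / L) : ℝ) : ℂ) := by
  rw [AddChar.map_neg_eq_inv, stdAddChar_apply, toCircle_apply, ← Complex.exp_neg,
    ← Complex.exp_add, ← Complex.exp_add, Complex.ofReal_mul, Complex.ofReal_cos, Complex.cos]
  push_cast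
  ring_nf

lemma fourierVec_apply_add (j m a : ZMod L) :
    fourierVec L j (m + a) = stdAddChar (j * a) * fourierVec L j m := by
  rw [fourierVec_apply, fourierVec_apply, mul_add, AddChar.map_add_eq_mul, mul_comm]

lemma deltaK_fourierVec (k : ℝ) (j : ZMod L) :
    deltaK L k (fourierVec L j) =
      ((2 * Real.cos (k + 2 * Real.pi * j.val / L) : ℝ) : ℂ) • fourierVec L j := by
  ext m
  rw [Pi.smul_apply, smul_eq_mul, ← exp_mul_stdAddChar_add_exp_mul_stdAddChar_neg, deltaK,
    sub_eq_add_neg, fourierVec_apply_add, fourierVec_apply_add, mul_one, mul_neg_one]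
  ring

lemma dft_comp_add_right {E : Type*} [AddCommGroup E] [Module ℂ E] (φ : ZMod L → E)
    (a j : ZMod L) : 𝓕 (fun m => φ (m + a)) j = stdAddChar (a * j) • 𝓕 φ j := by
  simp only [dft_apply, Finset.smul_sum, smul_smul]
  refine Fintype.sum_equiv (Equiv.addRight a) _ _ fun m => ?_
  rw [Equiv.coe_addRight, ← AddChar.map_add_eq_mul]
  congr 2
  ring1

lemma dft_deltaK (k : ℝ) (φ : ZMod L → ℂ) (j : ZMod L) :
    𝓕 (deltaK L k φ) j = ((2 * Real.cos (k + 2 * Real.pi * j.val / L) : ℝ) : ℂ) * 𝓕 φ j := by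
  have h : deltaK L k φ = Complex.exp (Complex.I * k) • (fun m => φ (m + 1)) +
      Complex.exp (-(Complex.I * k)) • (fun m => φ (m + -1)) := by
    ext m
    simp [deltaK, sub_eq_add_neg]
  rw [h, map_add, _root_.map_smul, _root_.map_smul, Pi.add_apply, Pi.smul_apply, Pi.smul_apply,
    dft_comp_add_right, dft_comp_add_right, ← exp_mul_stdAddChar_add_exp_mul_stdAddChar_neg]
  simp only [smul_eq_mul, one_mul, neg_one_mul]
  ring1

lemma norm_dft_sq_le {E : Type*} [SeminormedAddCommGroup E] [NormedSpace ℂ E]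
    (φ : ZMod L → E) (j : ZMod L) : ‖𝓕 φ j‖ ^ 2 ≤ L * ∑ m, ‖φ m‖ ^ 2 := by
  calc ‖𝓕 φ j‖ ^ 2 ≤ (∑ m, ‖φ m‖) ^ 2 := by
        gcongr
        refine (norm_sum_le _ _).trans_eq (Finset.sum_congr rfl fun m _ => ?_)
        rw [norm_smul, stdAddChar_apply, Circle.norm_coe, one_mul]
    _ ≤ L * ∑ m, ‖φ m‖ ^ 2 := by
        simpa using sq_sum_le_card_mul_sum_sq (s := Finset.univ) (f := fun m => ‖φ m‖)

lemma sum_dft_smul_fourierVec (φ : ZMod L → ℂ) :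
    ∑ j, ((L : ℂ)⁻¹ * 𝓕 φ j) • fourierVec L j = φ := by
  ext m
  conv_rhs => rw [← LinearEquiv.symm_apply_apply 𝓕 φ, invDFT_apply]
  simp only [Finset.sum_apply, Pi.smul_apply, smul_eq_mul, Finset.mul_sum, fourierVec_apply]
  refine Finset.sum_congr rfl fun j _ => by ring1

end Fourier

lemma eq_zero_of_tendsto_pow_mul {𝕜 : Type*} [NormedDivisionRing 𝕜] {ν c : 𝕜} (hν : 1 ≤ ‖ν‖)
    (h : Tendsto (fun n : ℕ => ν ^ n * c) atTop (𝓝 0)) : c = 0 := by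
  refine norm_le_zero_iff.mp (ge_of_tendsto' (by simpa using h.norm) fun n => ?_)
  exact le_mul_of_one_le_left (norm_nonneg c) (one_le_pow₀ hν)

lemma Complex.exists_add_eq_mul_eq_one (a : ℂ) :
    ∃ μ ν : ℂ, μ + ν = a ∧ μ * ν = 1 ∧ ‖μ‖ ≤ ‖ν‖ := by
  obtain ⟨δ, hδ⟩ := IsAlgClosed.exists_pow_nat_eq (a ^ 2 - 4) two_pos
  have hsum : (a + δ) / 2 + (a - δ) / 2 = a := by ring
  have hprod : (a + δ) / 2 * ((a - δ) / 2) = 1 := by linear_combination -hδ / 4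
  rcases le_total ‖(a + δ) / 2‖ ‖(a - δ) / 2‖ with h | h
  · exact ⟨_, _, hsum, hprod, h⟩
  · exact ⟨_, _, by rw [add_comm, hsum], by rw [mul_comm, hprod], h⟩

theorem eq_zero_or_exists_root_of_tendsto_zero {a : ℂ} {p : ℕ → ℂ}
    (hrec : ∀ n, p (n + 2) = a * p (n + 1) - p n) (hp : Tendsto p atTop (𝓝 0)) :
    (p 0 = 0 ∧ p 1 = 0) ∨ ∃ μ : ℂ, ‖μ‖ < 1 ∧ μ ^ 2 - a * μ + 1 = 0 ∧ p 1 = μ * p 0 := by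
  obtain ⟨μ, ν, hsum, hprod, hle⟩ := Complex.exists_add_eq_mul_eq_one a
  have hν : 1 ≤ ‖ν‖ := by
    have : ‖μ‖ * ‖ν‖ = 1 := by rw [← norm_mul, hprod, norm_one]
    nlinarith [norm_nonneg μ]
  have hfactor : ∀ n, p (n + 1) - μ * p n = ν ^ n * (p 1 - μ * p 0) := by
    intro n
    induction n with
    | zero => simp
    | succ n ih =>
      rw [hrec, pow_succ, mul_comm (ν ^ n) ν, mul_assoc, ← ih, ← hsum]
      linear_combination p n * hprod
  have hμ : p 1 = μ * p 0 := by
    refine sub_eq_zero.mp (eq_zero_of_tendsto_pow_mul hν (Tendsto.congr hfactor ?_))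
    simpa using (hp.comp (tendsto_add_atTop_nat 1)).sub (hp.const_mul μ)
  have hstep : ∀ n, p (n + 1) = μ * p n := fun n =>
    sub_eq_zero.mp (by rw [hfactor, hμ, sub_self, mul_zero])
  have hgeom : ∀ n, p n = μ ^ n * p 0 := by
    intro n
    induction n with
    | zero => simp
    | succ n ih => rw [hstep, ih, pow_succ', mul_assoc]
  have hroot : μ ^ 2 - a * μ + 1 = 0 := by
    rw [← hsum]
    linear_combination -hprod
  rcases lt_or_ge ‖μ‖ 1 with hμ1 | hμ1
  · exact Or.inr ⟨μ, hμ1, hroot, hμ⟩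
  · have h0 : p 0 = 0 := eq_zero_of_tendsto_pow_mul hμ1 (hp.congr hgeom)
    exact Or.inl ⟨h0, by rw [hμ, h0, mul_zero]⟩

section TransferMatrix

variable (L : ℕ) (E k : ℝ)

def T0Linear : Module.End ℂ ((ZMod L → ℂ) × (ZMod L → ℂ)) where
  toFun := T0 L E k
  map_add' Ψ Φ := by
    ext m
    · simp only [T0, deltaK, Prod.fst_add, Prod.snd_add, Pi.add_apply]
      ring
    · rfl
  map_smul' c Ψ := by
    ext m
    · simp only [T0, deltaK, Prod.smul_fst, Prod.smul_snd, Pi.smul_apply, smul_eq_mul,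
        RingHom.id_apply]
      ring
    · rfl

lemma iterate_T0 (n : ℕ) : (T0 L E k)^[n] = ⇑(T0Linear L E k ^ n) :=
  (Module.End.coe_pow (T0Linear L E k) n).symm

lemma T0_smul (c : ℂ) (Ψ : (ZMod L → ℂ) × (ZMod L → ℂ)) : T0 L E k (c • Ψ) = c • T0 L E k Ψ :=
  map_smul (T0Linear L E k) c Ψ

variable {L} [NeZero L]

lemma normSq_nonneg (Ψ : (ZMod L → ℂ) × (ZMod L → ℂ)) : 0 ≤ normSq L Ψ := by
  unfold normSq
  positivity

lemma normSq_smul (c : ℂ) (Ψ : (ZMod L → ℂ) × (ZMod L → ℂ)) :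
    normSq L (c • Ψ) = ‖c‖ ^ 2 * normSq L Ψ := by
  simp only [normSq, Prod.smul_fst, Prod.smul_snd, Pi.smul_apply, smul_eq_mul, norm_mul, mul_pow,
    ← Finset.mul_sum, mul_add]

lemma normSq_add_le (Ψ Φ : (ZMod L → ℂ) × (ZMod L → ℂ)) :
    normSq L (Ψ + Φ) ≤ 2 * (normSq L Ψ + normSq L Φ) := by
  have h (x y : ℂ) : ‖x + y‖ ^ 2 ≤ 2 * (‖x‖ ^ 2 + ‖y‖ ^ 2) := by
    nlinarith [norm_add_le x y, norm_nonneg (x + y), sq_nonneg (‖x‖ - ‖y‖)]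
  simp only [normSq, Prod.fst_add, Prod.snd_add, Pi.add_apply]
  have h1 := Finset.sum_le_sum fun m (_ : m ∈ Finset.univ) => h (Ψ.1 m) (Φ.1 m)
  have h2 := Finset.sum_le_sum fun m (_ : m ∈ Finset.univ) => h (Ψ.2 m) (Φ.2 m)
  simp only [← Finset.mul_sum, Finset.sum_add_distrib] at h1 h2
  linarith

lemma norm_dft_snd_sq_le (Ψ : (ZMod L → ℂ) × (ZMod L → ℂ)) (j : ZMod L) :
    ‖𝓕 Ψ.2 j‖ ^ 2 ≤ L * normSq L Ψ := by
  refine (norm_dft_sq_le Ψ.2 j).trans (mul_le_mul_of_nonneg_left ?_ (Nat.cast_nonneg L))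
  exact le_add_of_nonneg_left (by positivity)

def decayingSubmodule : Submodule ℂ ((ZMod L → ℂ) × (ZMod L → ℂ)) where
  carrier := {v | Summable fun n => normSq L ((T0 L E k)^[n] v)}
  zero_mem' := by
    show Summable _
    simp [iterate_T0, normSq]
  add_mem' {Ψ Φ} hΨ hΦ := by
    refine Summable.of_nonneg_of_le (fun n => normSq_nonneg _) (fun n => ?_)
      ((hΨ.add hΦ).mul_left 2)
    simpa only [iterate_T0, map_add] using normSq_add_le _ _
  smul_mem' c Ψ hΨ := by
    show Summable _
    simpa only [iterate_T0, map_smul, normSq_smul] using hΨ.mul_left _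

def decayingModes : Set ((ZMod L → ℂ) × (ZMod L → ℂ)) :=
  {w | ∃ (j : ZMod L) (μ : ℂ), ‖μ‖ < 1 ∧
    μ ^ 2 - ((E - 2 * Real.cos (k + 2 * Real.pi * (j.val : ℝ) / L) : ℝ) : ℂ) * μ + 1 = 0 ∧
    w = (μ • fourierVec L j, fourierVec L j)}

lemma T0_eigenvector_of_root {j : ZMod L} {μ : ℂ}
    (hμ : μ ^ 2 - ((E - 2 * Real.cos (k + 2 * Real.pi * (j.val : ℝ) / L) : ℝ) : ℂ) * μ + 1 = 0) :
    T0 L E k (μ • fourierVec L j, fourierVec L j) = μ • (μ • fourierVec L j, fourierVec L j) := by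
  refine Prod.ext (funext fun m => ?_) rfl
  have hΔ := congrFun (deltaK_fourierVec k j) m
  simp only [T0, deltaK, Pi.smul_apply, smul_eq_mul, Prod.smul_fst] at hΔ ⊢
  push_cast at hμ hΔ
  linear_combination -μ * hΔ - fourierVec L j m * hμ

lemma span_decayingModes_le :
    Submodule.span ℂ (decayingModes E k) ≤ decayingSubmodule (L := L) E k := by
  refine Submodule.span_le.mpr ?_
  rintro _ ⟨j, μ, hμ1, hμ, rfl⟩
  have horbit (n : ℕ) : (T0 L E k)^[n] (μ • fourierVec L j, fourierVec L j) =
      μ ^ n • (μ • fourierVec L j, fourierVec L j) := by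
    induction n with
    | zero => simp
    | succ n ih =>
      rw [Function.iterate_succ_apply', ih, T0_smul, T0_eigenvector_of_root E k hμ, smul_smul,
        pow_succ]
  have hnorm (n : ℕ) : normSq L ((T0 L E k)^[n] (μ • fourierVec L j, fourierVec L j)) =
      (‖μ‖ ^ 2) ^ n * normSq L (μ • fourierVec L j, fourierVec L j) := by
    rw [horbit, normSq_smul, norm_pow, ← pow_mul, ← pow_mul, mul_comm n 2]
  have hμ2 : ‖μ‖ ^ 2 < 1 := by nlinarith [norm_nonneg μ]
  exact ((summable_geometric_of_lt_one (by positivity) hμ2).mul_right _).congr fun n =>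
    (hnorm n).symm

end TransferMatrix

section Decomposition

variable {L : ℕ} [NeZero L] {E k : ℝ}

lemma dft_T0_fst (Ψ : (ZMod L → ℂ) × (ZMod L → ℂ)) (j : ZMod L) :
    𝓕 (T0 L E k Ψ).1 j =
      ((E - 2 * Real.cos (k + 2 * Real.pi * j.val / L) : ℝ) : ℂ) * 𝓕 Ψ.1 j - 𝓕 Ψ.2 j := by
  have h : (T0 L E k Ψ).1 = (E : ℂ) • Ψ.1 - deltaK L k Ψ.1 - Ψ.2 := rfl
  rw [h, map_sub, map_sub, _root_.map_smul, Pi.sub_apply, Pi.sub_apply, Pi.smul_apply,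
    dft_deltaK, smul_eq_mul]
  push_cast
  ring

lemma sum_fourierComponents (Ψ : (ZMod L → ℂ) × (ZMod L → ℂ)) :
    ∑ j, (L : ℂ)⁻¹ • (𝓕 Ψ.1 j • fourierVec L j, 𝓕 Ψ.2 j • fourierVec L j) = Ψ := by
  ext1 <;> simp only [Prod.fst_sum, Prod.snd_sum, Prod.smul_fst, Prod.smul_snd, smul_smul] <;>
    exact sum_dft_smul_fourierVec _

lemma fourierComponent_mem_span_decayingModes {v : (ZMod L → ℂ) × (ZMod L → ℂ)}
    (hv : Summable fun n => normSq L ((T0 L E k)^[n] v)) (j : ZMod L) :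
    (𝓕 v.1 j • fourierVec L j, 𝓕 v.2 j • fourierVec L j) ∈
      Submodule.span ℂ (decayingModes E k) := by
  set p : ℕ → ℂ := fun n => 𝓕 ((T0 L E k)^[n] v).2 j
  have hshift (n : ℕ) : p (n + 1) = 𝓕 ((T0 L E k)^[n] v).1 j := by
    simp only [p, Function.iterate_succ_apply']
    rfl
  have hrec (n : ℕ) : p (n + 2) =
      ((E - 2 * Real.cos (k + 2 * Real.pi * j.val / L) : ℝ) : ℂ) * p (n + 1) - p n := by
    rw [hshift, Function.iterate_succ_apply', dft_T0_fst, ← hshift]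
  have hlim : Tendsto p atTop (𝓝 0) := by
    have h := (hv.tendsto_atTop_zero.const_mul (L : ℝ)).sqrt
    rw [mul_zero, Real.sqrt_zero] at h
    exact squeeze_zero_norm (fun n => Real.le_sqrt_of_sq_le (norm_dft_snd_sq_le _ j)) h
  rcases eq_zero_or_exists_root_of_tendsto_zero hrec hlim with ⟨h2, h1⟩ | ⟨μ, hμ1, hμ, h⟩
  · change 𝓕 v.2 j = 0 at h2
    change 𝓕 v.1 j = 0 at h1
    rw [h1, h2, zero_smul, Prod.mk_zero_zero]
    exact Submodule.zero_mem _
  · change 𝓕 v.1 j = μ * 𝓕 v.2 j at h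
    rw [h, mul_comm, ← smul_smul, ← Prod.smul_mk]
    exact Submodule.smul_mem _ _ (Submodule.subset_span ⟨j, μ, hμ1, hμ, rfl⟩)

end Decomposition

theorem decaying_subspace_of_free_transfer_matrix
    (L : ℕ) [NeZero L] (E k : ℝ) (v : (ZMod L → ℂ) × (ZMod L → ℂ)) :
    Summable (fun n : ℕ => normSq L ((T0 L E k)^[n] v)) ↔
      v ∈ Submodule.span ℂ
        {w : (ZMod L → ℂ) × (ZMod L → ℂ) | ∃ (j : ZMod L) (μ : ℂ),
          ‖μ‖ < 1 ∧
          μ ^ 2 - ((E - 2 * Real.cos (k + 2 * Real.pi * (j.val : ℝ) / L) : ℝ) : ℂ) * μ + 1 = 0 ∧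
          w = (μ • fourierVec L j, fourierVec L j)} := by
  refine ⟨fun hv => ?_, fun hv => span_decayingModes_le E k hv⟩
  rw [← sum_fourierComponents v]
  exact Submodule.sum_mem _ fun j _ =>
    Submodule.smul_mem _ _ (fourierComponent_mem_span_decayingModes hv j)
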